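/- Let G be a temporal graph, k ≥ 1 an integer, and [ts,te] a window with C_[ts,te] nonempty, and let [a,b] = TTI(C_[ts,te]) be its tightest time interval. Then C_[a,b] = C_[ts,te], and TTI(C_[a,b]) = [a,b]. -/

import Mathlib

variable {V : Type*} [Fintype V]

/-- A vertex set `S` is `k`-dense in `G` if every vertex of `S` has
at least `k` neighbors of `G` lying in `S`. -/
def KDense (G : SimpleGraph V) (k : ℕ) (S : Set V) : Prop :=
  ∀ v ∈ S, k ≤ (S ∩ G.neighborSet v).ncard

/-- The `k`-core of `G`: the union of all `k`-dense vertex sets. -/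
def kCore (G : SimpleGraph V) (k : ℕ) : Set V :=
  ⋃₀ {S | KDense G k S}

/-- A temporal graph on a vertex set `V`: a finite set of temporal edges
`(u, v, t)` with `u ≠ v` and integer timestamp `t`. -/
structure TemporalGraph (V : Type*) where
  E : Finset (V × V × ℤ)
  ne : ∀ e ∈ E, e.1 ≠ e.2.1

/-- The projected (snapshot) graph of `G` over the time window `[ts, te]`. -/
def TemporalGraph.proj (G : TemporalGraph V) (ts te : ℤ) : SimpleGraph V where
  Adj u v := ∃ t, ts ≤ t ∧ t ≤ te ∧ ((u, v, t) ∈ G.E ∨ (v, u, t) ∈ G.E)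
  symm := by
    constructor
    rintro u v ⟨t, h1, h2, h3⟩
    exact ⟨t, h1, h2, h3.symm⟩
  loopless := by
    constructor
    rintro u ⟨t, h1, h2, h3⟩
    rcases h3 with h | h <;> exact G.ne _ h rfl

/-- The temporal `k`-core of the window `[ts, te]`: all temporal edges with
timestamp in `[ts, te]` whose both endpoints lie in the `k`-core of the
projected graph `G_[ts,te]`. -/
def TemporalGraph.tCore (G : TemporalGraph V) (k : ℕ) (ts te : ℤ) :
    Set (V × V × ℤ) :=
  {e | e ∈ G.E ∧ ts ≤ e.2.2 ∧ e.2.2 ≤ te ∧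
    e.1 ∈ kCore (G.proj ts te) k ∧ e.2.1 ∈ kCore (G.proj ts te) k}

/-- `[a, b]` is the tightest time interval of the edge set `C`:
`a` and `b` are the minimum and maximum timestamps of the edges in `C`. -/
def IsTTI (C : Set (V × V × ℤ)) (a b : ℤ) : Prop :=
  IsLeast {t | ∃ e ∈ C, e.2.2 = t} a ∧ IsGreatest {t | ∃ e ∈ C, e.2.2 = t} b


/-!
Shrinking the window to `[a, b]` can only shrink the projected graph, hence its `k`-core. Conversely,
every edge of `G_[ts,te]` between two vertices of its `k`-core `W` comes from a temporal edge of
`C_[ts,te]`, whose timestamp lies in `[a, b]`; so `W` is still `k`-dense in `G_[a,b]`, and the two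
cores, hence the two temporal cores, coincide.
-/

theorem KDense.mono_on {G H : SimpleGraph V} {k : ℕ} {S : Set V} (hS : KDense G k S)
    (hGH : ∀ u ∈ S, ∀ v ∈ S, G.Adj u v → H.Adj u v) : KDense H k S :=
  fun v hv => (hS v hv).trans <|
    Set.ncard_le_ncard fun u ⟨huS, hvu⟩ => ⟨huS, hGH v hv u huS hvu⟩

theorem KDense.mono {G H : SimpleGraph V} {k : ℕ} {S : Set V} (hGH : G ≤ H)
    (hS : KDense G k S) : KDense H k S :=
  hS.mono_on fun _ _ _ _ h => hGH h

omit [Fintype V] in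
theorem KDense.subset_kCore {G : SimpleGraph V} {k : ℕ} {S : Set V} (hS : KDense G k S) :
    S ⊆ kCore G k :=
  Set.subset_sUnion_of_mem hS

theorem kDense_kCore (G : SimpleGraph V) (k : ℕ) : KDense G k (kCore G k) :=
  fun v ⟨S, hS, hvS⟩ => (hS v hvS).trans <|
    Set.ncard_le_ncard (Set.inter_subset_inter_left _ hS.subset_kCore)

theorem kCore_mono {G H : SimpleGraph V} (k : ℕ) (hGH : G ≤ H) : kCore G k ⊆ kCore H k :=
  ((kDense_kCore G k).mono hGH).subset_kCore

namespace TemporalGraph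

variable (G : TemporalGraph V) {k : ℕ} {ts te a b : ℤ}

omit [Fintype V] in
theorem proj_mono (hs : ts ≤ a) (he : b ≤ te) : G.proj a b ≤ G.proj ts te :=
  fun _ _ ⟨t, h1, h2, h⟩ => ⟨t, hs.trans h1, h2.trans he, h⟩

variable {G}

theorem kCore_proj_eq_of_timestamps_mem_Icc (hs : ts ≤ a) (he : b ≤ te)
    (hC : ∀ e ∈ G.tCore k ts te, e.2.2 ∈ Set.Icc a b) :
    kCore (G.proj a b) k = kCore (G.proj ts te) k := by
  refine (kCore_mono k (G.proj_mono hs he)).antisymm (KDense.subset_kCore ?_)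
  refine (kDense_kCore _ k).mono_on fun u hu v hv ⟨t, h1, h2, h⟩ => ?_
  have ht : t ∈ Set.Icc a b :=
    h.elim (fun h => hC _ ⟨h, h1, h2, hu, hv⟩) (fun h => hC _ ⟨h, h1, h2, hv, hu⟩)
  exact ⟨t, ht.1, ht.2, h⟩

theorem tCore_eq_of_timestamps_mem_Icc (hs : ts ≤ a) (he : b ≤ te)
    (hC : ∀ e ∈ G.tCore k ts te, e.2.2 ∈ Set.Icc a b) :
    G.tCore k a b = G.tCore k ts te := by
  ext e
  simp only [tCore, kCore_proj_eq_of_timestamps_mem_Icc hs he hC]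
  constructor
  · rintro ⟨hE, h1, h2, hu, hv⟩
    exact ⟨hE, hs.trans h1, h2.trans he, hu, hv⟩
  · intro h
    exact ⟨h.1, (hC e h).1, (hC e h).2, h.2.2.2⟩

end TemporalGraph

omit [Fintype V] in
theorem IsTTI.mem_Icc {C : Set (V × V × ℤ)} {a b : ℤ} (h : IsTTI C a b) {e : V × V × ℤ}
    (he : e ∈ C) : e.2.2 ∈ Set.Icc a b :=
  ⟨h.1.2 ⟨e, he, rfl⟩, h.2.2 ⟨e, he, rfl⟩⟩

theorem tCore_of_TTI_general (G : TemporalGraph V) (k : ℕ)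
    (ts te a b : ℤ)
    (hTTI : IsTTI (G.tCore k ts te) a b) :
    G.tCore k a b = G.tCore k ts te ∧ IsTTI (G.tCore k a b) a b := by
  obtain ⟨ea, hea, rfl⟩ := hTTI.1.1
  obtain ⟨eb, heb, rfl⟩ := hTTI.2.1
  have hEq : G.tCore k ea.2.2 eb.2.2 = G.tCore k ts te :=
    G.tCore_eq_of_timestamps_mem_Icc hea.2.1 heb.2.2.1 fun _ he => hTTI.mem_Icc he
  exact ⟨hEq, by rwa [hEq]⟩

theorem tCore_of_TTI (G : TemporalGraph V) (k : ℕ) (hk : 1 ≤ k)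
    (ts te a b : ℤ) (hw : ts ≤ te)
    (hne : (G.tCore k ts te).Nonempty)
    (hTTI : IsTTI (G.tCore k ts te) a b) :
    G.tCore k a b = G.tCore k ts te ∧ IsTTI (G.tCore k a b) a b :=
  tCore_of_TTI_general G k ts te a b hTTI
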